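/- For any transposition applied to a permutation, the number of cycles in the breakpoint graph changes by at most 2, i.e., Δc(τ) ≤ 2. -/

import Mathlib

/-! Every black edge of `b` outside `D` is also a black edge of `b'`, so gluing together the
alternating cycles of `(b', g)` that meet `D` gives a partition coarser than the alternating
cycles of `(b, g)`. Since `b'` pairs up the six points of `D`, at most three cycles of `(b', g)`
meet `D`, and gluing them into one loses at most two classes. -/

/-- The alternating cycles of the breakpoint graph of a black perfect matching `b`
and a gray perfect matching `g` (both fixed-point-free involutions). -/
def altCycleSetoid {V : Type*} (b g : Equiv.Perm V) : Setoid V :=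
  Relation.EqvGen.setoid (fun v w => b v = w ∨ g v = w)

/-- The number of alternating cycles of the breakpoint graph. -/
noncomputable def numAltCycles {V : Type*} (b g : Equiv.Perm V) : ℕ :=
  Nat.card (Quotient (altCycleSetoid b g))

theorem Nat.card_add_one_le_of_injOn_compl {α β : Type*} [Fintype α] [Finite β]
    (f : α → β) (B : Finset α) (hB : B.Nonempty)
    (hinj : ∀ x y, f x = f y → x ∉ B → x = y) :
    Nat.card α + 1 ≤ Nat.card β + B.card := by
  classical
  have := Fintype.ofFinite β
  have hdisj : Disjoint (Bᶜ.image f) (B.image f) := by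
    simp only [Finset.disjoint_left, Finset.mem_image, Finset.mem_compl]
    rintro _ ⟨x, hx, rfl⟩ ⟨y, hy, hxy⟩
    exact hx (hinj x y hxy.symm hx ▸ hy)
  have hcompl : (Bᶜ.image f).card = Bᶜ.card :=
    Finset.card_image_of_injOn fun x hx y _ hxy => hinj x y hxy (Finset.mem_compl.mp hx)
  have hunion := Finset.card_le_univ (Bᶜ.image f ∪ B.image f)
  rw [Finset.card_union_of_disjoint hdisj, hcompl, Finset.card_compl] at hunion
  have := (hB.image f).card_pos
  have := Finset.card_le_univ B
  simp only [Nat.card_eq_fintype_card]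
  omega

namespace Setoid

variable {α : Type*}

def glue (s : Setoid α) (D : Set α) : Setoid α where
  r v w := s v w ∨ (∃ a ∈ D, s v a) ∧ (∃ a ∈ D, s w a)
  iseqv := by
    refine ⟨fun v => .inl (s.refl v), ?_, ?_⟩
    · rintro v w (h | ⟨hv, hw⟩)
      exacts [.inl (s.symm h), .inr ⟨hw, hv⟩]
    · rintro u v w (huv | ⟨hu, hv⟩) (hvw | ⟨hv', hw⟩)
      · exact .inl (s.trans huv hvw)
      · obtain ⟨a, ha, hva⟩ := hv'
        exact .inr ⟨⟨a, ha, s.trans huv hva⟩, hw⟩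
      · obtain ⟨a, ha, hva⟩ := hv
        exact .inr ⟨hu, ⟨a, ha, s.trans (s.symm hvw) hva⟩⟩
      · exact .inr ⟨hu, hw⟩

theorem card_quotient_le_of_le [Finite α] {s t : Setoid α} (h : s ≤ t) :
    Nat.card (Quotient t) ≤ Nat.card (Quotient s) :=
  Nat.card_le_card_of_surjective (Quotient.map' id h)
    fun z => z.inductionOn fun v => ⟨Quotient.mk s v, rfl⟩

theorem card_quotient_add_one_le_glue [Finite α] (s : Setoid α) [DecidableEq (Quotient s)]
    (D : Finset α) (hD : D.Nonempty) :
    Nat.card (Quotient s) + 1 ≤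
      Nat.card (Quotient (s.glue D)) + (D.image (Quotient.mk s)).card := by
  have := Fintype.ofFinite (Quotient s)
  refine Nat.card_add_one_le_of_injOn_compl (Quotient.map' id fun _ _ => Or.inl) _
    (hD.image _) fun x y hxy hx => ?_
  induction x using Quotient.inductionOn with | h v => ?_
  induction y using Quotient.inductionOn with | h w => ?_
  rcases Quotient.exact hxy with hvw | ⟨⟨a, ha, hva⟩, -⟩
  · exact Quotient.sound hvw
  · exact absurd (Finset.mem_image.mpr ⟨a, ha, (Quotient.sound hva).symm⟩) hx

end Setoid

section BreakpointGraph

variable {V : Type*} (b b' g : Equiv.Perm V) (D : Finset V)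

theorem altCycleSetoid_le_glue (hbD : ∀ v ∈ D, b v ∈ D) (hsame : ∀ v ∉ D, b' v = b v) :
    altCycleSetoid b g ≤ (altCycleSetoid b' g).glue D := by
  refine Setoid.eqvGen_le fun v w hvw => ?_
  by_cases hv : v ∈ D
  · rcases hvw with rfl | rfl
    · exact .inr ⟨⟨v, hv, Setoid.refl' _ v⟩, ⟨b v, hbD v hv, Setoid.refl' _ _⟩⟩
    · exact .inl (.rel _ _ (.inr rfl))
  · rcases hvw with rfl | rfl
    · exact .inl (.rel _ _ (.inl (hsame v hv)))
    · exact .inl (.rel _ _ (.inr rfl))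

theorem two_mul_card_image_mk_altCycleSetoid_le [DecidableEq (Quotient (altCycleSetoid b' g))]
    (hb'1 : ∀ v, b' v ≠ v) (hb'D : ∀ v ∈ D, b' v ∈ D) :
    2 * (D.image (Quotient.mk (altCycleSetoid b' g))).card ≤ D.card := by
  classical
  refine Finset.mul_card_image_le_card D 2 fun _ hc => ?_
  obtain ⟨v, hv, rfl⟩ := Finset.mem_image.mp hc
  have hpair : {v, b' v} ⊆
      D.filter (fun w => Quotient.mk _ w = Quotient.mk (altCycleSetoid b' g) v) := by
    intro w hw
    simp only [Finset.mem_insert, Finset.mem_singleton] at hw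
    rcases hw with rfl | rfl
    · exact Finset.mem_filter.mpr ⟨hv, rfl⟩
    · exact Finset.mem_filter.mpr
        ⟨hb'D v hv, Quotient.sound (.symm _ _ (.rel _ _ (.inl rfl)))⟩
  simpa [Finset.card_pair (hb'1 v).symm] using Finset.card_le_card hpair

end BreakpointGraph

theorem stmt3_general {V : Type*} [Fintype V]
    (b b' g : Equiv.Perm V)
    (hb'1 : ∀ v, b' v ≠ v)
    (D : Finset V) (hD : D.card = 6)
    (hbD : ∀ v ∈ D, b v ∈ D) (hb'D : ∀ v ∈ D, b' v ∈ D)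
    (hsame : ∀ v ∉ D, b' v = b v) :
    numAltCycles b' g ≤ numAltCycles b g + 2 := by
  classical
  have hglue := Setoid.card_quotient_add_one_le_glue (altCycleSetoid b' g) D
    (Finset.card_pos.mp (by omega))
  have hmono := Setoid.card_quotient_le_of_le (altCycleSetoid_le_glue b b' g D hbD hsame)
  have hclasses := two_mul_card_image_mk_altCycleSetoid_le b' g D hb'1 hb'D
  unfold numAltCycles
  omega

/-- For any transposition applied to a permutation, the number of cycles of the
breakpoint graph changes by at most 2: a transposition replaces exactly three black edges
(on a set `D` of six endpoints) by three new black edges on the same endpoints,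
leaving the gray matching `g` untouched, and then
`Δc = numAltCycles b' g - numAltCycles b g ≤ 2`. -/
theorem stmt3 {V : Type*} [Fintype V] [DecidableEq V]
    (b b' g : Equiv.Perm V)
    (hb1 : ∀ v, b v ≠ v) (hb2 : ∀ v, b (b v) = v)
    (hb'1 : ∀ v, b' v ≠ v) (hb'2 : ∀ v, b' (b' v) = v)
    (hg1 : ∀ v, g v ≠ v) (hg2 : ∀ v, g (g v) = v)
    (D : Finset V) (hD : D.card = 6)
    (hbD : ∀ v ∈ D, b v ∈ D) (hb'D : ∀ v ∈ D, b' v ∈ D)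
    (hsame : ∀ v ∉ D, b' v = b v) :
    numAltCycles b' g ≤ numAltCycles b g + 2 :=
  stmt3_general b b' g hb'1 D hD hbD hb'D hsame
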